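/- arXiv:2411.05429 — 7 statements merged into one kernel-verified Lean document; each statement's English description precedes it below -/
import Mathlib

section
/- In a finite group G, the maximal cliques of the enhanced power graph of G are exactly the maximal cyclic subgroups of G. -/
/-- The enhanced power graph of a group: distinct `x`, `y` are adjacent iff they lie in a
common cyclic subgroup. -/
def enhancedPowerGraph (G : Type*) [Group G] : SimpleGraph G where
  Adj x y := x ≠ y ∧ ∃ z : G, x ∈ Subgroup.zpowers z ∧ y ∈ Subgroup.zpowers z
  symm := ⟨fun x y ⟨h, z, hx, hy⟩ => ⟨h.symm, z, hy, hx⟩⟩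
  loopless := ⟨fun x h => h.1 rfl⟩

/-- The power graph of a group: distinct `x`, `y` are adjacent iff one is a power of the
other. -/
def powerGraph (G : Type*) [Group G] : SimpleGraph G where
  Adj x y := x ≠ y ∧ (x ∈ Subgroup.zpowers y ∨ y ∈ Subgroup.zpowers x)
  symm := ⟨fun x y ⟨h, hz⟩ => ⟨h.symm, hz.symm⟩⟩
  loopless := ⟨fun x h => h.1 rfl⟩

/-- An independent set: a set of pairwise non-adjacent vertices. -/
def SimpleGraph.IsIndepSet' {V : Type*} (Γ : SimpleGraph V) (s : Set V) : Prop :=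
  s.Pairwise fun x y => ¬ Γ.Adj x y

/-! Elements of a clique `s` pairwise commute, so `s` generates an abelian group, which is cyclic
as soon as its Sylow subgroups are. Fix a prime `p` and let `m` be the `p'`-part of `|G|`. The
powers `x ^ m` of the elements of `s` form a clique of `p`-elements. Of two `p`-elements, the
order of one divides that of the other, and in a common cyclic group this makes it a power of
the other; so this clique lies in the cyclic group generated by its element of largest order.
Every `p`-element `x` of `⟨s⟩` is a power of `x ^ m`, which lies in the group generated by that
clique, so the Sylow `p`-subgroup of `⟨s⟩` is cyclic. Thus every clique lies in a cyclic
subgroup, which is itself a clique, and both directions follow by maximality. -/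

open Subgroup

theorem IsCyclic.mem_zpowers_of_orderOf_dvd {α : Type*} [Group α] [IsCyclic α] [Finite α]
    {x y : α} (h : orderOf x ∣ orderOf y) : x ∈ zpowers y := by
  classical
  have := Fintype.ofFinite α
  -- `zpowers y` already fills the at most `orderOf y` solutions of `z ^ orderOf y = 1`
  have hsub : (zpowers y : Set α).toFinset ⊆
      Finset.univ.filter fun z : α => z ^ orderOf y = 1 := by
    intro z hz
    simpa [orderOf_dvd_iff_pow_eq_one] using orderOf_dvd_of_mem_zpowers (Set.mem_toFinset.mp hz)
  have hcard : (Finset.univ.filter fun z : α => z ^ orderOf y = 1).card ≤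
      (zpowers y : Set α).toFinset.card := by
    rw [Set.toFinset_card, ← Nat.card_eq_fintype_card, SetLike.coe_sort_coe, Nat.card_zpowers]
    exact IsCyclic.card_pow_eq_one_le (orderOf_pos y)
  have hx : x ∈ Finset.univ.filter fun z : α => z ^ orderOf y = 1 := by
    simpa using orderOf_dvd_iff_pow_eq_one.mp h
  rw [(Finset.eq_of_subset_of_card_le hsub hcard).symm, Set.mem_toFinset] at hx
  exact hx

theorem mem_zpowers_of_orderOf_dvd_of_mem_zpowers {G : Type*} [Group G] [Finite G]
    {a x y : G} (hx : x ∈ zpowers a) (hy : y ∈ zpowers a) (h : orderOf x ∣ orderOf y) :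
    x ∈ zpowers y := by
  have key : (⟨x, hx⟩ : zpowers a) ∈ zpowers ⟨y, hy⟩ :=
    IsCyclic.mem_zpowers_of_orderOf_dvd (by simpa only [Subgroup.orderOf_mk] using h)
  obtain ⟨k, hk⟩ := mem_zpowers_iff.mp key
  exact mem_zpowers_iff.mpr ⟨k, congrArg Subtype.val hk⟩

theorem pow_mem_closure_image_pow {G : Type*} [Group G] {s : Set G}
    (hs : ∀ x ∈ s, ∀ y ∈ s, Commute x y) (n : ℕ) {x : G} (hx : x ∈ Subgroup.closure s) :
    x ^ n ∈ Subgroup.closure ((· ^ n) '' s) := by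
  have hcent := closure_le_centralizer_centralizer s
  induction hx using closure_induction with
  | mem x hx => exact subset_closure ⟨x, hx, rfl⟩
  | one => simp
  | mul x y hx hy ihx ihy =>
    have hxy : Commute x y := Set.centralizer_centralizer_comm_of_comm
      (fun a ha b hb => (hs a ha b hb).eq) x (hcent hx) y (hcent hy)
    rw [hxy.mul_pow]
    exact mul_mem ihx ihy
  | inv x hx ih => simpa only [inv_pow] using inv_mem ih

namespace enhancedPowerGraph

variable {G : Type*} [Group G]

theorem isClique_of_subset_zpowers {s : Set G} {g : G} (h : s ⊆ zpowers g) :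
    (enhancedPowerGraph G).IsClique s :=
  fun _ hx _ hy hxy => ⟨hxy, g, h hx, h hy⟩

theorem isClique_coe_of_isCyclic (H : Subgroup G) [IsCyclic H] :
    (enhancedPowerGraph G).IsClique (H : Set G) := by
  obtain ⟨g, rfl⟩ := H.isCyclic_iff_exists_zpowers_eq_top.mp ‹_›
  exact isClique_of_subset_zpowers subset_rfl

theorem commute_of_isClique {s : Set G} (hs : (enhancedPowerGraph G).IsClique s) :
    ∀ x ∈ s, ∀ y ∈ s, Commute x y := by
  intro x hx y hy
  rcases eq_or_ne x y with rfl | hxy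
  · exact Commute.refl x
  obtain ⟨-, a, hxa, hya⟩ := hs hx hy hxy
  obtain ⟨i, rfl⟩ := mem_zpowers_iff.mp hxa
  obtain ⟨j, rfl⟩ := mem_zpowers_iff.mp hya
  exact Commute.zpow_zpow_self a i j

theorem isClique_image_pow {s : Set G} (hs : (enhancedPowerGraph G).IsClique s) (n : ℕ) :
    (enhancedPowerGraph G).IsClique ((· ^ n) '' s) := by
  rintro _ ⟨x, hx, rfl⟩ _ ⟨y, hy, rfl⟩ hxy
  obtain ⟨-, a, hxa, hya⟩ := hs hx hy (fun h => hxy (h ▸ rfl))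
  exact ⟨hxy, a, pow_mem hxa n, pow_mem hya n⟩

theorem exists_subset_zpowers_of_isClique_of_pow_eq_one [Finite G] {s : Set G} {p n : ℕ}
    (hp : p.Prime) (hs : (enhancedPowerGraph G).IsClique s) (hpow : ∀ x ∈ s, x ^ p ^ n = 1) :
    ∃ g : G, s ⊆ zpowers g := by
  rcases s.eq_empty_or_nonempty with rfl | hne
  · exact ⟨1, Set.empty_subset _⟩
  obtain ⟨g, hg, hmax⟩ := Set.exists_max_image s orderOf s.toFinite hne
  refine ⟨g, fun x hx => ?_⟩
  rcases eq_or_ne x g with rfl | hxg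
  · exact mem_zpowers x
  obtain ⟨-, a, hxa, hga⟩ := hs hx hg hxg
  refine mem_zpowers_of_orderOf_dvd_of_mem_zpowers hxa hga ?_
  obtain ⟨i, -, hi⟩ := (Nat.dvd_prime_pow hp).mp (orderOf_dvd_of_pow_eq_one (hpow x hx))
  obtain ⟨j, -, hj⟩ := (Nat.dvd_prime_pow hp).mp (orderOf_dvd_of_pow_eq_one (hpow g hg))
  have hle := hmax x hx
  rw [hi, hj] at hle ⊢
  exact Nat.pow_dvd_pow p ((Nat.pow_le_pow_iff_right hp.one_lt).mp hle)

theorem exists_le_zpowers_of_isPGroup_of_le_closure [Finite G] {s : Set G} {p : ℕ}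
    (hp : p.Prime) (hs : (enhancedPowerGraph G).IsClique s) {P : Subgroup G}
    (hP : IsPGroup p P) (hPs : P ≤ Subgroup.closure s) : ∃ g, P ≤ zpowers g := by
  set m := ordCompl[p] (Nat.card G)
  obtain ⟨g, hg⟩ := exists_subset_zpowers_of_isClique_of_pow_eq_one hp (isClique_image_pow hs m)
    (n := (Nat.card G).factorization p) (by
      rintro _ ⟨x, -, rfl⟩
      rw [← pow_mul, mul_comm, Nat.ordProj_mul_ordCompl_eq_self, pow_card_eq_one'])
  refine ⟨g, fun x hx => ?_⟩
  obtain ⟨k, hk⟩ := hP ⟨x, hx⟩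
  have hcop : m.Coprime (orderOf x) :=
    ((Nat.coprime_ordCompl hp Nat.card_pos.ne').pow_left k).symm.coprime_dvd_right
      (orderOf_dvd_of_pow_eq_one (by simpa using congrArg Subtype.val hk))
  have hxm : x ∈ zpowers (x ^ m) := mem_zpowers_pow_iff.mpr hcop
  have hxm_mem : x ^ m ∈ Subgroup.closure ((· ^ m) '' s) :=
    pow_mem_closure_image_pow (commute_of_isClique hs) m (hPs hx)
  exact zpowers_le.mpr ((closure_le _).mpr hg hxm_mem) hxm

theorem isCyclic_closure_of_isClique [Finite G] {s : Set G}
    (hs : (enhancedPowerGraph G).IsClique s) : IsCyclic (Subgroup.closure s) := by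
  have hcomm : IsMulCommutative (Subgroup.closure s) :=
    isMulCommutative_closure fun x hx y hy => (commute_of_isClique hs x hx y hy).eq
  have : Group.IsNilpotent (Subgroup.closure s) :=
    ⟨1, upperCentralSeries_one_eq_top_iff.mpr hcomm⟩
  have : IsZGroup (Subgroup.closure s) := by
    refine ⟨fun p hp P => ?_⟩
    obtain ⟨g, hg⟩ := exists_le_zpowers_of_isPGroup_of_le_closure hp hs
      (P.isPGroup'.map (Subgroup.closure s).subtype) (map_subtype_le _)
    have := Subgroup.isCyclic_of_le hg
    exact ((P : Subgroup (Subgroup.closure s)).equivMapOfInjective _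
      (Subgroup.closure s).subtype_injective).isCyclic.mpr this
  infer_instance

end enhancedPowerGraph

open enhancedPowerGraph

/-- In a finite group, the maximal cliques of the enhanced power graph are exactly the
maximal cyclic subgroups. -/
theorem maximal_cliques_eq_maximal_cyclic_subgroups
    {G : Type*} [Group G] [Finite G] (s : Set G) :
    Maximal (enhancedPowerGraph G).IsClique s ↔
      ∃ H : Subgroup G, Maximal (fun K : Subgroup G => IsCyclic K) H ∧ s = (H : Set G) := by
  constructor
  · rintro ⟨hs, hmax⟩
    have hcyc := isCyclic_closure_of_isClique hs
    have hs_eq : s = Subgroup.closure s :=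
      subset_closure.antisymm (hmax (isClique_coe_of_isCyclic _) subset_closure)
    refine ⟨Subgroup.closure s, ⟨hcyc, fun K hK hle => ?_⟩, hs_eq⟩
    rw [← SetLike.coe_subset_coe, ← hs_eq] at hle ⊢
    exact hmax (isClique_coe_of_isCyclic K) hle
  · rintro ⟨H, ⟨hH, hmax⟩, rfl⟩
    refine ⟨isClique_coe_of_isCyclic H, fun t ht hHt => ?_⟩
    have hle : H ≤ Subgroup.closure t := fun x hx => subset_closure (hHt hx)
    exact subset_closure.trans (hmax (isCyclic_closure_of_isClique ht) hle)
end

section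
/- Let G be a finite group and g an element of maximal order in G. Then the cyclic subgroup ⟨g⟩ is an independent set of maximum size in the complement of the enhanced power graph of G. -/
open Subgroup

section Group

variable {G : Type*} [Group G]

theorem Subgroup.mem_of_pow_mem_of_coprime {H : Subgroup G} {x : G} {a b : ℕ}
    (hab : a.Coprime b) (ha : x ^ a ∈ H) (hb : x ^ b ∈ H) : x ∈ H := by
  have hx : x = (x ^ a) ^ a.gcdA b * (x ^ b) ^ a.gcdB b := by
    rw [← zpow_natCast, ← zpow_natCast, ← zpow_mul, ← zpow_mul, ← zpow_add,
      ← Nat.gcd_eq_gcd_ab, hab.gcd_eq_one, Nat.cast_one, zpow_one]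
  rw [hx]
  exact mul_mem (zpow_mem ha _) (zpow_mem hb _)

theorem Commute.left_mem_zpowers_mul_of_coprime {x y : G} (h : Commute x y)
    (hco : (orderOf x).Coprime (orderOf y)) : x ∈ zpowers (x * y) := by
  refine mem_of_pow_mem_of_coprime hco ?_ ?_
  · rw [pow_orderOf_eq_one]
    exact one_mem _
  · rw [← mul_one (x ^ orderOf y), ← pow_orderOf_eq_one y, ← h.mul_pow]
    exact npow_mem_zpowers _ _

theorem Commute.right_mem_zpowers_mul_of_coprime {x y : G} (h : Commute x y)
    (hco : (orderOf x).Coprime (orderOf y)) : y ∈ zpowers (x * y) :=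
  h.eq ▸ h.symm.left_mem_zpowers_mul_of_coprime hco.symm

-- `⟨z ^ j⟩ = ⟨z ^ gcd(|z|, j)⟩`, and `|z ^ i|` divides its order only if `gcd(|z|, j)` divides `i`.
theorem mem_zpowers_of_orderOf_dvd {x y z : G} (hz : IsOfFinOrder z) (hx : x ∈ zpowers z)
    (hy : y ∈ zpowers z) (h : orderOf x ∣ orderOf y) : x ∈ zpowers y := by
  obtain ⟨i, rfl⟩ : ∃ i : ℕ, z ^ i = x := hz.mem_powers_iff_mem_zpowers.mpr hx
  obtain ⟨j, rfl⟩ : ∃ j : ℕ, z ^ j = y := hz.mem_powers_iff_mem_zpowers.mpr hy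
  set d := (orderOf z).gcd j
  have hdm : d ∣ orderOf z := Nat.gcd_dvd_left _ j
  have hd : 0 < d := Nat.gcd_pos_of_pos_left j hz.orderOf_pos
  have hgen : z ^ d ∈ zpowers (z ^ j) := by
    refine mem_of_pow_mem_of_coprime (Nat.coprime_div_gcd_div_gcd hd) ?_ ?_
    · rw [← pow_mul, Nat.mul_div_cancel' hdm, pow_orderOf_eq_one]
      exact one_mem _
    · rw [← pow_mul, Nat.mul_div_cancel' (Nat.gcd_dvd_right _ j)]
      exact mem_zpowers _
  have hdi : d ∣ i := by
    have h' : orderOf (z ^ i) ∣ orderOf z / d := by rwa [hz.orderOf_pow z j] at h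
    have hm : orderOf z ∣ i * (orderOf z / d) := by
      rw [orderOf_dvd_iff_pow_eq_one, pow_mul]
      exact orderOf_dvd_iff_pow_eq_one.mp h'
    refine Nat.dvd_of_mul_dvd_mul_right (Nat.div_pos (Nat.le_of_dvd hz.orderOf_pos hdm) hd) ?_
    rwa [Nat.mul_div_cancel' hdm]
  obtain ⟨k, rfl⟩ := hdi
  rw [pow_mul]
  exact pow_mem hgen k

theorem ncard_zpowers (g : G) : (zpowers g : Set G).ncard = orderOf g := by
  rw [← Nat.card_coe_set_eq, SetLike.coe_sort_coe, Nat.card_zpowers]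

end Group

theorem SimpleGraph.isIndepSet'_compl_iff {V : Type*} {Γ : SimpleGraph V} {s : Set V} :
    Γᶜ.IsIndepSet' s ↔ Γ.IsClique s :=
  Γ.isIndepSet_compl

section EnhancedPowerGraph

variable {G : Type*} [Group G]

theorem isClique_enhancedPowerGraph_zpowers (g : G) :
    (enhancedPowerGraph G).IsClique (zpowers g : Set G) :=
  fun _ hx _ hy hxy => ⟨hxy, g, hx, hy⟩

namespace SimpleGraph.IsClique

variable {S : Set G} (hS : (enhancedPowerGraph G).IsClique S)
include hS

theorem exists_zpowers {x y : G} (hx : x ∈ S) (hy : y ∈ S) :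
    ∃ z : G, x ∈ zpowers z ∧ y ∈ zpowers z := by
  rcases eq_or_ne x y with rfl | hxy
  · exact ⟨x, mem_zpowers x, mem_zpowers x⟩
  · exact (hS hx hy hxy).2

theorem image_pow (n : ℕ) : (enhancedPowerGraph G).IsClique ((· ^ n) '' S) := by
  rintro _ ⟨x, hx, rfl⟩ _ ⟨y, hy, rfl⟩ hxy
  obtain ⟨z, hxz, hyz⟩ := hS.exists_zpowers hx hy
  exact ⟨hxy, z, pow_mem hxz n, pow_mem hyz n⟩

theorem commute_of_mem_closure {x y : G} (hx : x ∈ closure S) (hy : y ∈ closure S) :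
    Commute x y := by
  have : IsMulCommutative (closure S) := isMulCommutative_closure fun x hx y hy => by
    obtain ⟨z, ⟨i, rfl⟩, ⟨j, rfl⟩⟩ := hS.exists_zpowers hx hy
    exact (Commute.zpow_zpow_self z i j).eq
  exact setLike_mul_comm hx hy

end SimpleGraph.IsClique

-- Bounding the orders by `n` lets the induction run over coprime factorizations of `n`.
def CliquesGenerateCyclic (G : Type*) [Group G] (n : ℕ) : Prop :=
  ∀ S : Set G, (enhancedPowerGraph G).IsClique S → (∀ x ∈ S, orderOf x ∣ n) →
    ∃ c : G, orderOf c ∣ n ∧ closure S = zpowers c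

theorem cliquesGenerateCyclic_prime_pow [Finite G] {p : ℕ} (hp : p.Prime) (k : ℕ) :
    CliquesGenerateCyclic G (p ^ k) := by
  intro S hS hord
  rcases S.eq_empty_or_nonempty with rfl | hne
  · exact ⟨1, by simp, by simp⟩
  obtain ⟨a, ha, hmax⟩ := S.exists_max_image orderOf S.toFinite hne
  refine ⟨a, hord a ha, le_antisymm (closure_le _ |>.mpr fun x hx => ?_)
    (zpowers_le.mpr (subset_closure ha))⟩
  obtain ⟨z, hxz, haz⟩ := hS.exists_zpowers hx ha
  refine mem_zpowers_of_orderOf_dvd (isOfFinOrder_of_finite z) hxz haz ?_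
  obtain ⟨i, -, hi⟩ := (Nat.dvd_prime_pow hp).mp (hord x hx)
  obtain ⟨j, -, hj⟩ := (Nat.dvd_prime_pow hp).mp (hord a ha)
  have hle := hmax x hx
  rw [hi, hj, Nat.pow_le_pow_iff_right hp.one_lt] at hle
  rw [hi, hj]
  exact pow_dvd_pow p hle

theorem orderOf_pow_dvd_of_orderOf_dvd_mul {x : G} {a b : ℕ} (h : orderOf x ∣ a * b) :
    orderOf (x ^ b) ∣ a := by
  rw [orderOf_dvd_iff_pow_eq_one, ← pow_mul, mul_comm]
  exact orderOf_dvd_iff_pow_eq_one.mp h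

theorem CliquesGenerateCyclic.mul {a b : ℕ} (hab : a.Coprime b) (ha : CliquesGenerateCyclic G a)
    (hb : CliquesGenerateCyclic G b) : CliquesGenerateCyclic G (a * b) := by
  intro S hS hord
  have hcl : ∀ n, Subgroup.closure ((· ^ n) '' S) ≤ closure S := fun n =>
    closure_le _ |>.mpr <| Set.image_subset_iff.mpr fun x hx => pow_mem (subset_closure hx) n
  obtain ⟨c₁, hc₁, hS₁⟩ := ha _ (hS.image_pow b) <| Set.forall_mem_image.mpr fun x hx =>
    orderOf_pow_dvd_of_orderOf_dvd_mul (hord x hx)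
  obtain ⟨c₂, hc₂, hS₂⟩ := hb _ (hS.image_pow a) <| Set.forall_mem_image.mpr fun x hx =>
    orderOf_pow_dvd_of_orderOf_dvd_mul (mul_comm a b ▸ hord x hx)
  have hc₁S : c₁ ∈ closure S := hcl b (hS₁ ▸ mem_zpowers c₁)
  have hc₂S : c₂ ∈ closure S := hcl a (hS₂ ▸ mem_zpowers c₂)
  have hcomm : Commute c₁ c₂ := hS.commute_of_mem_closure hc₁S hc₂S
  have hco : (orderOf c₁).Coprime (orderOf c₂) := hab.of_dvd hc₁ hc₂
  have hle₁ : zpowers c₁ ≤ zpowers (c₁ * c₂) :=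
    zpowers_le.mpr (hcomm.left_mem_zpowers_mul_of_coprime hco)
  have hle₂ : zpowers c₂ ≤ zpowers (c₁ * c₂) :=
    zpowers_le.mpr (hcomm.right_mem_zpowers_mul_of_coprime hco)
  refine ⟨c₁ * c₂, ?_, le_antisymm (closure_le _ |>.mpr fun x hx => ?_)
    (zpowers_le.mpr (mul_mem hc₁S hc₂S))⟩
  · rw [hcomm.orderOf_mul_eq_mul_orderOf_of_coprime hco]
    exact mul_dvd_mul hc₁ hc₂
  · refine mem_of_pow_mem_of_coprime hab (hle₂ ?_) (hle₁ ?_)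
    · exact hS₂ ▸ subset_closure (Set.mem_image_of_mem _ hx)
    · exact hS₁ ▸ subset_closure (Set.mem_image_of_mem _ hx)

theorem cliquesGenerateCyclic_of_ne_zero [Finite G] {n : ℕ} (hn : n ≠ 0) :
    CliquesGenerateCyclic G n := by
  induction n using Nat.recOnPrimeCoprime with
  | zero => exact absurd rfl hn
  | prime_pow p k hp => exact cliquesGenerateCyclic_prime_pow hp k
  | coprime a b ha hb hab iha ihb =>
    exact (iha (by omega)).mul hab (ihb (by omega))

theorem SimpleGraph.IsClique.exists_closure_eq_zpowers [Finite G] {S : Set G}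
    (hS : (enhancedPowerGraph G).IsClique S) : ∃ c : G, closure S = zpowers c := by
  obtain ⟨c, -, hc⟩ := cliquesGenerateCyclic_of_ne_zero Nat.card_pos.ne' S hS
    fun x _ => orderOf_dvd_natCard x
  exact ⟨c, hc⟩

end EnhancedPowerGraph

/-- If `g` has maximal order, then `⟨g⟩` is an independent set of maximum size in the
complement of the enhanced power graph. -/
theorem zpowers_isMaxIndepSet_compl_enhancedPowerGraph
    {G : Type*} [Group G] [Finite G] (g : G) (hg : ∀ x : G, orderOf x ≤ orderOf g) :
    ((enhancedPowerGraph G)ᶜ).IsIndepSet' (Subgroup.zpowers g : Set G) ∧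
      ∀ t : Set G, ((enhancedPowerGraph G)ᶜ).IsIndepSet' t →
        t.ncard ≤ ((Subgroup.zpowers g : Subgroup G) : Set G).ncard := by
  refine ⟨SimpleGraph.isIndepSet'_compl_iff.mpr (isClique_enhancedPowerGraph_zpowers g),
    fun t ht => ?_⟩
  obtain ⟨c, hc⟩ := (SimpleGraph.isIndepSet'_compl_iff.mp ht).exists_closure_eq_zpowers
  calc t.ncard ≤ (zpowers c : Set G).ncard := Set.ncard_le_ncard (hc ▸ subset_closure)
    _ = orderOf c := ncard_zpowers c
    _ ≤ orderOf g := hg c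
    _ = (zpowers g : Set G).ncard := (ncard_zpowers g).symm
end

section
/- Let G be a finite group. Every isolated vertex of the complement of the enhanced power graph of G is a power of any fixed element g of maximal order in G. -/
lemma exists_mem_zpowers_of_not_compl_enhancedPowerGraph_adj {G : Type*} [Group G] {x y : G}
    (h : ¬ ((enhancedPowerGraph G)ᶜ).Adj x y) :
    ∃ z : G, x ∈ Subgroup.zpowers z ∧ y ∈ Subgroup.zpowers z := by
  rcases eq_or_ne x y with rfl | hne
  · exact ⟨x, Subgroup.mem_zpowers x, Subgroup.mem_zpowers x⟩
  · rw [SimpleGraph.compl_adj, not_and, not_not] at h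
    exact (h hne).2

lemma zpowers_eq_of_mem_zpowers_of_orderOf_le {G : Type*} [Group G] {g z : G}
    (hz : IsOfFinOrder z) (hgz : g ∈ Subgroup.zpowers z) (hord : orderOf z ≤ orderOf g) :
    Subgroup.zpowers g = Subgroup.zpowers z :=
  have : Finite (Subgroup.zpowers z) := hz.finite_zpowers.to_subtype
  Subgroup.eq_of_le_of_card_ge (Subgroup.zpowers_le.mpr hgz)
    (by rwa [Nat.card_zpowers, Nat.card_zpowers])

/-- Every isolated vertex of the complement of the enhanced power graph is a power of any
fixed element of maximal order. -/
theorem isolated_compl_enhancedPowerGraph_mem_zpowers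
    {G : Type*} [Group G] [Finite G] (g : G) (hg : ∀ y : G, orderOf y ≤ orderOf g)
    (x : G) (hx : ∀ y : G, ¬ ((enhancedPowerGraph G)ᶜ).Adj x y) :
    x ∈ Subgroup.zpowers g := by
  obtain ⟨z, hxz, hgz⟩ := exists_mem_zpowers_of_not_compl_enhancedPowerGraph_adj (hx g)
  rwa [zpowers_eq_of_mem_zpowers_of_orderOf_le (isOfFinOrder_of_finite z) hgz (hg z)]
end

section
/- Let G be a finite group. The subgraph of the complement of the enhanced power graph of G induced on the set of non-isolated vertices is connected. -/
open Subgroup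

namespace enhancedPowerGraph

variable {G : Type*} [Group G]

theorem compl_adj_iff {x y : G} :
    (enhancedPowerGraph G)ᶜ.Adj x y ↔ x ≠ y ∧ ∀ z : G, x ∈ zpowers z → y ∉ zpowers z := by
  simp only [SimpleGraph.compl_adj, enhancedPowerGraph, not_and, not_exists]
  tauto

theorem notMem_zpowers_of_compl_adj {x a m : G} (h : (enhancedPowerGraph G)ᶜ.Adj x a)
    (ha : a ∈ zpowers m) : x ∉ zpowers m :=
  fun hx => (compl_adj_iff.mp h).2 m hx ha

theorem compl_adj_of_notMem_maximal_zpowers {x m : G}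
    (hm : Maximal (fun H : Subgroup G => IsCyclic H) (zpowers m)) (hx : x ∉ zpowers m) :
    (enhancedPowerGraph G)ᶜ.Adj x m := by
  refine compl_adj_iff.mpr ⟨fun hxm => hx (hxm ▸ mem_zpowers x), fun z hxz hmz => hx ?_⟩
  exact hm.2 (isCyclic_zpowers z) (zpowers_le.mpr hmz) hxz

theorem exists_maximal_zpowers_mem [Finite G] (a : G) :
    ∃ m : G, a ∈ zpowers m ∧ Maximal (fun H : Subgroup G => IsCyclic H) (zpowers m) := by
  obtain ⟨H, haH, hH⟩ :=
    Finite.exists_le_maximal (p := fun H : Subgroup G => IsCyclic H) (isCyclic_zpowers a)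
  obtain ⟨m, rfl⟩ := H.isCyclic_iff_exists_zpowers_eq_top.mp hH.1
  exact ⟨m, haH (mem_zpowers a), hH⟩

end enhancedPowerGraph

open enhancedPowerGraph

/-- The induced subgraph of the complement of the enhanced power graph on the set of
non-isolated vertices is connected. -/
theorem compl_enhancedPowerGraph_preconnected
    {G : Type*} [Group G] [Finite G] :
    (((enhancedPowerGraph G)ᶜ).induce
        {x : G | ∃ y, ((enhancedPowerGraph G)ᶜ).Adj x y}).Preconnected := by
  rintro ⟨x, a, hxa⟩ ⟨y, b, hyb⟩
  obtain ⟨m₁, ham₁, hm₁⟩ := exists_maximal_zpowers_mem a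
  obtain ⟨m₂, hbm₂, hm₂⟩ := exists_maximal_zpowers_mem b
  have hxm₁ := compl_adj_of_notMem_maximal_zpowers hm₁ (notMem_zpowers_of_compl_adj hxa ham₁)
  have hym₂ := compl_adj_of_notMem_maximal_zpowers hm₂ (notMem_zpowers_of_compl_adj hyb hbm₂)
  set S := {x : G | ∃ y, ((enhancedPowerGraph G)ᶜ).Adj x y}
  have reachable_of_adj {u v : S} (h : (enhancedPowerGraph G)ᶜ.Adj u v) :
      (((enhancedPowerGraph G)ᶜ).induce S).Reachable u v :=
    SimpleGraph.Adj.reachable (G := ((enhancedPowerGraph G)ᶜ).induce S) h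
  have x_m₁ := reachable_of_adj (u := ⟨x, a, hxa⟩) (v := ⟨m₁, x, hxm₁.symm⟩) hxm₁
  by_cases hy₁ : y ∈ zpowers m₁
  · have hm₁m₂ : (enhancedPowerGraph G)ᶜ.Adj m₁ m₂ :=
      compl_adj_of_notMem_maximal_zpowers hm₂
        fun h => notMem_zpowers_of_compl_adj hyb hbm₂ (zpowers_le.mpr h hy₁)
    exact x_m₁.trans <| (reachable_of_adj (v := ⟨m₂, y, hym₂.symm⟩) hm₁m₂).trans
      (reachable_of_adj hym₂.symm)
  · exact x_m₁.trans (reachable_of_adj (compl_adj_of_notMem_maximal_zpowers hm₁ hy₁).symm)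
end

section
/- Let G be a finite group. Any two non-isolated vertices of the complement of the enhanced power graph of G are joined by a path of length at most 3 within the non-isolated vertices; that is, the induced subgraph on non-isolated vertices is connected of diameter at most 3. -/
namespace SimpleGraph

variable {V : Type*} {Γ : SimpleGraph V}

lemma Walk.support_subset_nonisolated {u v : V} (hu : ∃ y, Γ.Adj u y) :
    ∀ p : Γ.Walk u v, ∀ x ∈ p.support, ∃ y, Γ.Adj x y
  | .nil, _, hx => by rwa [Walk.mem_support_nil_iff.1 hx]
  | .cons h p, x, hx => by
    rw [Walk.support_cons, List.mem_cons] at hx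
    rcases hx with rfl | hx
    · exact hu
    · exact p.support_subset_nonisolated ⟨_, h.symm⟩ x hx

lemma induce_nonisolated_preconnected_and_dist_le {k : ℕ}
    (h : ∀ a b : V, (∃ y, Γ.Adj a y) → (∃ y, Γ.Adj b y) → ∃ p : Γ.Walk a b, p.length ≤ k) :
    (Γ.induce {x | ∃ y, Γ.Adj x y}).Preconnected ∧
      ∀ a b : {x | ∃ y, Γ.Adj x y}, (Γ.induce {x | ∃ y, Γ.Adj x y}).dist a b ≤ k := by
  have short_walk (a b : {x | ∃ y, Γ.Adj x y}) :
      ∃ q : (Γ.induce {x | ∃ y, Γ.Adj x y}).Walk a b, q.length ≤ k := by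
    obtain ⟨p, hp⟩ := h a b a.2 b.2
    refine ⟨p.induce {x | ∃ y, Γ.Adj x y} (p.support_subset_nonisolated a.2), ?_⟩
    rwa [← Walk.length_map (Embedding.induce _).toHom, Walk.map_induce]
  refine ⟨fun a b => ?_, fun a b => ?_⟩
  · obtain ⟨q, -⟩ := short_walk a b
    exact q.reachable
  · obtain ⟨q, hq⟩ := short_walk a b
    exact (dist_le q).trans hq

end SimpleGraph

section EnhancedPowerGraph

open Subgroup

variable {G : Type*} [Group G]

lemma compl_enhancedPowerGraph_adj {x y : G} :
    (enhancedPowerGraph G)ᶜ.Adj x y ↔ ∀ z, x ∈ zpowers z → y ∉ zpowers z := by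
  refine ⟨fun ⟨hne, h⟩ z hx hy => h ⟨hne, z, hx, hy⟩,
    fun h => ⟨?_, fun ⟨_, z, hx, hy⟩ => h z hx hy⟩⟩
  rintro rfl
  exact h x (mem_zpowers x) (mem_zpowers x)

lemma exists_zpowers_le_maximal [Finite G] (z : G) :
    ∃ n, zpowers z ≤ zpowers n ∧ Maximal (· ∈ Set.range (zpowers (G := G))) (zpowers n) := by
  obtain ⟨_, hle, hmax⟩ := Finite.exists_le_maximal (Set.mem_range_self (f := zpowers) z)
  obtain ⟨n, rfl⟩ := hmax.prop
  exact ⟨n, hle, hmax⟩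

lemma compl_enhancedPowerGraph_adj_of_notMem_maximal {n x : G}
    (hn : Maximal (· ∈ Set.range (zpowers (G := G))) (zpowers n)) (hx : x ∉ zpowers n) :
    (enhancedPowerGraph G)ᶜ.Adj x n :=
  compl_enhancedPowerGraph_adj.2 fun w hxw hnw =>
    hx (hn.2 (Set.mem_range_self w) (zpowers_le.2 hnw) hxw)

lemma exists_walk_compl_enhancedPowerGraph_length_le_three [Finite G] {a a' b b' : G}
    (ha : (enhancedPowerGraph G)ᶜ.Adj a a') (hb : (enhancedPowerGraph G)ᶜ.Adj b b') :
    ∃ p : (enhancedPowerGraph G)ᶜ.Walk a b, p.length ≤ 3 := by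
  by_cases ha'b : (enhancedPowerGraph G)ᶜ.Adj a' b
  · exact ⟨.cons ha (.cons ha'b .nil), by simp⟩
  obtain ⟨z, ha'z, hbz⟩ : ∃ z, a' ∈ zpowers z ∧ b ∈ zpowers z := by
    by_contra! h
    exact ha'b (compl_enhancedPowerGraph_adj.2 h)
  obtain ⟨n, hzn, hn⟩ := exists_zpowers_le_maximal z
  have han := compl_enhancedPowerGraph_adj_of_notMem_maximal hn
    (compl_enhancedPowerGraph_adj.1 ha.symm n (hzn ha'z))
  have hb'n := compl_enhancedPowerGraph_adj_of_notMem_maximal hn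
    (compl_enhancedPowerGraph_adj.1 hb n (hzn hbz))
  exact ⟨.cons han (.cons hb'n.symm (.cons hb.symm .nil)), by simp⟩

end EnhancedPowerGraph

/-- The induced subgraph of the complement of the enhanced power graph on the set of
non-isolated vertices is connected of diameter at most 3. -/
theorem compl_enhancedPowerGraph_preconnected_diam_le_three
    {G : Type*} [Group G] [Finite G] :
    (((enhancedPowerGraph G)ᶜ).induce
        {x : G | ∃ y, ((enhancedPowerGraph G)ᶜ).Adj x y}).Preconnected ∧
      ∀ a b : {x : G | ∃ y, ((enhancedPowerGraph G)ᶜ).Adj x y},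
        (((enhancedPowerGraph G)ᶜ).induce
            {x : G | ∃ y, ((enhancedPowerGraph G)ᶜ).Adj x y}).dist a b ≤ 3 := by
  exact SimpleGraph.induce_nonisolated_preconnected_and_dist_le fun _ _ ⟨_, ha⟩ ⟨_, hb⟩ =>
    exists_walk_compl_enhancedPowerGraph_length_le_three ha hb
end

section
/- For any prime p and positive integer m, the power graph of the cyclic group of order p^m is complete. -/
/-!
In a cyclic group of order `n` the equation `x ^ d = 1` has at most `d` solutions, so for every
`y` the subgroup `⟨y⟩` is exactly the solution set of `x ^ (orderOf y) = 1`. Hence `x` is a power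
of `y` as soon as `orderOf x ∣ orderOf y`. When `n = p ^ m` all element orders are powers of `p`,
so any two of them are comparable under divisibility.
-/

theorem Nat.dvd_or_dvd_of_dvd_prime_pow {p m a b : ℕ} (hp : p.Prime) (ha : a ∣ p ^ m)
    (hb : b ∣ p ^ m) : a ∣ b ∨ b ∣ a := by
  obtain ⟨i, -, rfl⟩ := (Nat.dvd_prime_pow hp).mp ha
  obtain ⟨j, -, rfl⟩ := (Nat.dvd_prime_pow hp).mp hb
  exact (le_total i j).imp (pow_dvd_pow p) (pow_dvd_pow p)

section FiniteCyclic

variable {G : Type*} [Group G] [Finite G] [IsCyclic G]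

theorem IsCyclic.mem_zpowers_of_pow_orderOf_eq_one {x y : G} (hx : x ^ orderOf y = 1) :
    x ∈ Subgroup.zpowers y := by
  classical
  cases nonempty_fintype G
  let roots : Finset G := {b | b ^ orderOf y = 1}
  have hsub : (Subgroup.zpowers y : Set G).toFinset ⊆ roots := by
    intro b hb
    obtain ⟨k, rfl⟩ := mem_powers_iff_mem_zpowers.mpr (Set.mem_toFinset.mp hb)
    simp only [roots, Finset.mem_filter, Finset.mem_univ, true_and]
    rw [pow_right_comm, pow_orderOf_eq_one, one_pow]
  have hcard : roots.card ≤ (Subgroup.zpowers y : Set G).toFinset.card := by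
    simpa [roots, Fintype.card_zpowers] using IsCyclic.card_pow_eq_one_le (orderOf_pos y)
  rw [← SetLike.mem_coe, ← Set.mem_toFinset, Finset.eq_of_subset_of_card_le hsub hcard]
  simpa [roots] using hx

theorem IsCyclic.mem_zpowers_of_orderOf_dvd_s8 {x y : G} (h : orderOf x ∣ orderOf y) :
    x ∈ Subgroup.zpowers y :=
  mem_zpowers_of_pow_orderOf_eq_one (orderOf_dvd_iff_pow_eq_one.mp h)

theorem powerGraph_eq_top_of_orderOf_dvd_total
    (h : ∀ x y : G, orderOf x ∣ orderOf y ∨ orderOf y ∣ orderOf x) : powerGraph G = ⊤ := by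
  ext x y
  refine ⟨SimpleGraph.Adj.ne, fun hxy => ⟨hxy, ?_⟩⟩
  exact (h x y).imp IsCyclic.mem_zpowers_of_orderOf_dvd_s8 IsCyclic.mem_zpowers_of_orderOf_dvd_s8

end FiniteCyclic

theorem powerGraph_cyclic_primePow_eq_top_general
    (p : ℕ) (hp : p.Prime) (m : ℕ)
    (G : Type*) [Group G] [Finite G] [IsCyclic G] (h : Nat.card G = p ^ m) :
    powerGraph G = ⊤ :=
  powerGraph_eq_top_of_orderOf_dvd_total fun x y =>
    Nat.dvd_or_dvd_of_dvd_prime_pow hp (h ▸ orderOf_dvd_natCard x) (h ▸ orderOf_dvd_natCard y)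

/-- The power graph of a cyclic group of prime power order is complete. -/
theorem powerGraph_cyclic_primePow_eq_top
    (p : ℕ) (hp : p.Prime) (m : ℕ) (hm : 0 < m)
    (G : Type*) [Group G] [Finite G] [IsCyclic G] (h : Nat.card G = p ^ m) :
    powerGraph G = ⊤ :=
  powerGraph_cyclic_primePow_eq_top_general p hp m G h
end

section
/- If the power graph of a finite group G is complete, then G is a cyclic group of prime power order. -/
open Subgroup

theorem powerGraph_eq_top_iff {G : Type*} [Group G] :
    powerGraph G = ⊤ ↔ ∀ x y : G, x ∈ zpowers y ∨ y ∈ zpowers x := by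
  refine ⟨fun h x y => ?_, fun h => ?_⟩
  · rcases eq_or_ne x y with rfl | hxy
    · exact .inl (mem_zpowers x)
    · exact (h ▸ hxy : (powerGraph G).Adj x y).2
  · ext x y
    exact and_iff_left (h x y)

theorem isCyclic_of_forall_mem_zpowers_or_mem_zpowers {G : Type*} [Group G] [Finite G]
    (h : ∀ x y : G, x ∈ zpowers y ∨ y ∈ zpowers x) : IsCyclic G := by
  obtain ⟨g, hg⟩ := Finite.exists_max (orderOf : G → ℕ)
  refine ⟨g, fun x => (h x g).elim id fun hgx => ?_⟩
  have hxg : zpowers g = zpowers x :=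
    eq_of_le_of_card_ge (zpowers_le.mpr hgx) (by simpa only [Nat.card_zpowers] using hg x)
  exact (hxg ▸ mem_zpowers x : x ∈ zpowers g)

theorem orderOf_eq_of_mem_zpowers_of_prime {G : Type*} [Group G] {a b : G}
    (hab : a ∈ zpowers b) (ha : (orderOf a).Prime) (hb : (orderOf b).Prime) :
    orderOf a = orderOf b :=
  (Nat.prime_dvd_prime_iff_eq ha hb).mp (orderOf_dvd_of_mem_zpowers hab)

theorem exists_card_eq_prime_pow_of_orderOf_eq_of_prime {G : Type*} [Group G] [Finite G]
    (h : ∀ a b : G, (orderOf a).Prime → (orderOf b).Prime → orderOf a = orderOf b) :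
    ∃ p m : ℕ, p.Prime ∧ Nat.card G = p ^ m := by
  rcases eq_or_ne (Nat.card G) 1 with h1 | h1
  · exact ⟨2, 0, Nat.prime_two, h1⟩
  have hp := Nat.minFac_prime h1
  have := Fact.mk hp
  obtain ⟨a, ha⟩ := exists_prime_orderOf_dvd_card' _ (Nat.minFac_dvd (Nat.card G))
  refine ⟨_, _, hp, Nat.eq_prime_pow_of_unique_prime_dvd Nat.card_pos.ne' fun {q} hq hqG => ?_⟩
  have := Fact.mk hq
  obtain ⟨b, hb⟩ := exists_prime_orderOf_dvd_card' q hqG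
  rw [← ha, ← hb]
  exact h b a (hb ▸ hq) (ha ▸ hp)

/-- If the power graph of a finite group is complete, then the group is cyclic of prime
power order. -/
theorem isCyclic_primePow_of_powerGraph_eq_top
    {G : Type*} [Group G] [Finite G] (h : powerGraph G = ⊤) :
    IsCyclic G ∧ ∃ p m : ℕ, p.Prime ∧ Nat.card G = p ^ m := by
  have hchain := powerGraph_eq_top_iff.mp h
  refine ⟨isCyclic_of_forall_mem_zpowers_or_mem_zpowers hchain,
    exists_card_eq_prime_pow_of_orderOf_eq_of_prime fun a b ha hb => ?_⟩
  rcases hchain a b with hab | hba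
  · exact orderOf_eq_of_mem_zpowers_of_prime hab ha hb
  · exact (orderOf_eq_of_mem_zpowers_of_prime hba hb ha).symm
end
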